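/- arXiv:2311.01379 — 5 statements merged into one kernel-verified Lean document; each statement's English description precedes it below -/
import Mathlib

section
/- If a finite common-interest game (G, W) is (λ, μ)-k-coalitionally smooth, then every k-strong Nash equilibrium a* satisfies W(a*) ≥ (λ_ζ / (1 + μ_ζ)) · W(a°) for every ζ ∈ {1,...,k}, where a° is any welfare-maximizing joint action; hence the k-strong price of anarchy is at least max_{ζ ∈ [k]} λ_ζ/(1+μ_ζ). -/
/-! Compare the smoothness inequality for the pair (a*, a°) with the equilibrium property:
every size-ζ coalition deviation from a* towards a° is one of the deviations that a k-strong
equilibrium rules out, so the average on the right is at most W(a*), which gives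
λ_ζ W(a°) − μ_ζ W(a*) ≤ W(a*). -/

open Finset

/-- In the joint action `a`, replace the actions of the agents in `Γ` by those from `a'`. -/
def deviate {n : ℕ} {A : Fin n → Type*} (a a' : ∀ i, A i) (Γ : Finset (Fin n)) :
    ∀ i, A i := fun i => if i ∈ Γ then a' i else a i

/-- `a` is a k-strong Nash equilibrium of the common-interest game with welfare `W`:
no group of between 1 and k agents can deviate to strictly improve `W`. -/
def kSNE {n : ℕ} {A : Fin n → Type*} (W : (∀ i, A i) → ℝ) (k : ℕ) (a : ∀ i, A i) : Prop :=
  ∀ Γ : Finset (Fin n), 1 ≤ Γ.card → Γ.card ≤ k → ∀ a' : ∀ i, A i,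
    W (deviate a a' Γ) ≤ W a

/-- The game is (λ,μ)-k-coalitionally smooth: for all joint actions a, a' and all
ζ ∈ {1,…,k}, the average welfare of size-ζ coalition deviations from a toward a' is
at least λ_ζ W(a') − μ_ζ W(a). -/
def CoalSmooth {n : ℕ} {A : Fin n → Type*} (W : (∀ i, A i) → ℝ) (k : ℕ)
    (lam mu : ℕ → ℝ) : Prop :=
  ∀ a a' : ∀ i, A i, ∀ ζ, 1 ≤ ζ → ζ ≤ k →
    lam ζ * W a' - mu ζ * W a ≤
      (1 / (n.choose ζ : ℝ)) *
        ∑ Γ ∈ Finset.powersetCard ζ (Finset.univ : Finset (Fin n)), W (deviate a a' Γ)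

theorem Finset.one_div_card_mul_sum_le {ι : Type*} (s : Finset ι) (f : ι → ℝ) {c : ℝ}
    (hc : 0 ≤ c) (h : ∀ i ∈ s, f i ≤ c) : 1 / (#s : ℝ) * ∑ i ∈ s, f i ≤ c := by
  rcases s.eq_empty_or_nonempty with rfl | hs
  · simpa using hc
  · rw [one_div, inv_mul_le_iff₀ (by exact_mod_cast hs.card_pos), ← nsmul_eq_mul]
    exact sum_le_card_nsmul s f c h

theorem kSNE.one_div_choose_mul_sum_deviate_le {n k ζ : ℕ} {A : Fin n → Type*}
    {W : (∀ i, A i) → ℝ} {a : ∀ i, A i} (ha : kSNE W k a) (a' : ∀ i, A i)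
    (h1 : 1 ≤ ζ) (hk : ζ ≤ k) (hW : 0 ≤ W a) :
    1 / (n.choose ζ : ℝ) * ∑ Γ ∈ powersetCard ζ (univ : Finset (Fin n)), W (deviate a a' Γ)
      ≤ W a := by
  have hcard : n.choose ζ = #(powersetCard ζ (univ : Finset (Fin n))) := by simp
  rw [hcard]
  refine one_div_card_mul_sum_le _ _ hW fun Γ hΓ => ?_
  obtain ⟨-, hΓζ⟩ := mem_powersetCard.1 hΓ
  exact ha Γ (hΓζ ▸ h1) (hΓζ ▸ hk) a'

theorem stmt_3_general {n k : ℕ} {A : Fin n → Type*} (W : (∀ i, A i) → ℝ)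
    (hW : ∀ a, 0 ≤ W a) (lam mu : ℕ → ℝ)
    (hmu : ∀ ζ, 0 ≤ mu ζ)
    (hsmooth : CoalSmooth W k lam mu)
    (astar : ∀ i, A i) (hstar : kSNE W k astar)
    (aopt : ∀ i, A i) :
    ∀ ζ, 1 ≤ ζ → ζ ≤ k → (lam ζ / (1 + mu ζ)) * W aopt ≤ W astar := by
  intro ζ h1 hk
  have key : lam ζ * W aopt - mu ζ * W astar ≤ W astar :=
    (hsmooth astar aopt ζ h1 hk).trans
      (hstar.one_div_choose_mul_sum_deviate_le aopt h1 hk (hW astar))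
  rw [div_mul_eq_mul_div, div_le_iff₀ (by linarith [hmu ζ])]
  linarith

/-- In a (λ,μ)-k-coalitionally smooth common-interest game every
k-strong Nash equilibrium a* satisfies W(a*) ≥ (λ_ζ/(1+μ_ζ))·W(a°) for every
ζ ∈ {1,…,k}, where a° maximizes W. -/
theorem stmt_3 {n k : ℕ} {A : Fin n → Type*} (W : (∀ i, A i) → ℝ)
    (hW : ∀ a, 0 ≤ W a) (lam mu : ℕ → ℝ)
    (hlam : ∀ ζ, 0 ≤ lam ζ) (hmu : ∀ ζ, 0 ≤ mu ζ)
    (hsmooth : CoalSmooth W k lam mu)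
    (astar : ∀ i, A i) (hstar : kSNE W k astar)
    (aopt : ∀ i, A i) (hopt : ∀ a, W a ≤ W aopt) :
    ∀ ζ, 1 ≤ ζ → ζ ≤ k → (lam ζ / (1 + mu ζ)) * W aopt ≤ W astar :=
  stmt_3_general W hW lam mu hmu hsmooth astar hstar aopt
end

section
/- In a resource allocation game with welfare W(a) = Σ_r v_r w(|a|_r), for any two joint actions a, a' and any ζ ≤ n: Σ_{Γ, |Γ|=ζ} W(a'_Γ, a_{-Γ}) = Σ_{r} v_r Σ_{α,β: 0≤α≤e_r, 0≤β≤o_r, α+β≤ζ} C(e_r,α)·C(o_r,β)·C(n−e_r−o_r, ζ−α−β)·w(e_r + x_r + β − α). -/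
/-!
Swap the sums over coalitions and resources. Fix a resource `r` and let `E`, `O` be the
agents using `r` only in `a`, only in `a'`. Under `(a'_Γ, a_{-Γ})` the users of `r` are
`E \ Γ`, the agents using `r` in both profiles, and `O ∩ Γ`; so their number is
`e_r + x_r + |Γ ∩ O| - |Γ ∩ E|` and depends on `Γ` only through
`(|Γ ∩ E|, |Γ ∩ O|) = (α, β)`. A coalition of size `ζ` with these intersection sizes is a
choice of `α` agents of `E`, `β` of `O` and `ζ - α - β` of the other `n - e_r - o_r` agents.
-/

open Finset

-- `onlyIn a a' r`, `onlyIn a' a r` and `inBoth a a' r` are the paper's `e_r`, `o_r` and `x_r`.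
def onlyIn {n : ℕ} {R : Type*} [DecidableEq R] (a a' : Fin n → Finset R) (r : R) : ℕ :=
  ((Finset.univ : Finset (Fin n)).filter (fun i => r ∈ a i ∧ r ∉ a' i)).card

def inBoth {n : ℕ} {R : Type*} [DecidableEq R] (a a' : Fin n → Finset R) (r : R) : ℕ :=
  ((Finset.univ : Finset (Fin n)).filter (fun i => r ∈ a i ∧ r ∈ a' i)).card

section PowersetCount

variable {ι : Type*} [DecidableEq ι]

theorem union_inter_eq_and_union_sdiff_eq {A B s : Finset ι} (hAs : A ⊆ s)
    (hBs : Disjoint B s) : (A ∪ B) ∩ s = A ∧ (A ∪ B) \ s = B := by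
  have hB : ∀ x ∈ B, x ∉ s := fun _ hx => Finset.disjoint_left.1 hBs hx
  constructor <;> ext x <;> simp only [mem_inter, mem_union, mem_sdiff] <;> grind

theorem card_filter_powersetCard_inter_eq_choose_mul {u s : Finset ι} (hsu : s ⊆ u)
    (p : Finset ι → Prop) [DecidablePred p] {k α : ℕ} (hαk : α ≤ k) :
    #{Γ ∈ powersetCard k u | #(Γ ∩ s) = α ∧ p (Γ \ s)} =
      (#s).choose α * #{B ∈ powersetCard (k - α) (u \ s) | p B} := by
  rw [← card_powersetCard, ← card_product]
  refine card_nbij' (fun Γ => (Γ ∩ s, Γ \ s)) (fun AB => AB.1 ∪ AB.2) ?_ ?_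
    (fun Γ _ => by dsimp only; rw [union_comm, sdiff_union_inter]) ?_
  all_goals simp only [Set.MapsTo, Set.RightInvOn, Set.LeftInvOn, mem_coe, mem_product,
    mem_filter, mem_powersetCard]
  · rintro Γ ⟨⟨hΓu, hΓk⟩, hα, hp⟩
    have := card_inter_add_card_sdiff Γ s
    exact ⟨⟨inter_subset_right, hα⟩, ⟨sdiff_subset_sdiff hΓu le_rfl, by omega⟩, hp⟩
  · rintro ⟨A, B⟩ ⟨⟨hAs, hAα⟩, ⟨hBu, hBk⟩, hp⟩
    have hBs : Disjoint B s := (subset_sdiff.1 hBu).2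
    obtain ⟨hA, hB⟩ := union_inter_eq_and_union_sdiff_eq hAs hBs
    refine ⟨⟨union_subset (hAs.trans hsu) (hBu.trans sdiff_subset), ?_⟩, by rw [hA, hAα],
      by rw [hB]; exact hp⟩
    rw [card_union_of_disjoint (hBs.symm.mono_left hAs), hAα, hBk]
    omega
  · rintro ⟨A, B⟩ ⟨⟨hAs, -⟩, ⟨hBu, -⟩, -⟩
    obtain ⟨hA, hB⟩ := union_inter_eq_and_union_sdiff_eq hAs (subset_sdiff.1 hBu).2
    exact Prod.ext hA hB

theorem card_filter_powersetCard_inter_inter {u s t : Finset ι} (hsu : s ⊆ u) (htu : t ⊆ u)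
    (hst : Disjoint s t) {k α β : ℕ} (hαβk : α + β ≤ k) :
    #{Γ ∈ powersetCard k u | #(Γ ∩ s) = α ∧ #(Γ ∩ t) = β} =
      (#s).choose α * (#t).choose β * (#u - #s - #t).choose (k - α - β) := by
  have hsdiff (Γ : Finset ι) : (Γ \ s) ∩ t = Γ ∩ t := by
    rw [sdiff_inter_right_comm, (hst.symm.mono_left inter_subset_right).sdiff_eq_left]
  have htus : t ⊆ u \ s := subset_sdiff.2 ⟨htu, hst.symm⟩
  have hrest := card_filter_powersetCard_inter_eq_choose_mul htus (fun _ => True)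
    (k := k - α) (α := β) (by omega)
  simp only [and_true, filter_true, card_powersetCard] at hrest
  rw [filter_congr fun Γ _ => by rw [← hsdiff Γ],
    card_filter_powersetCard_inter_eq_choose_mul hsu (fun B => #(B ∩ t) = β) (by omega),
    hrest, card_sdiff_of_subset htus, card_sdiff_of_subset hsu, mul_assoc]

theorem sum_powersetCard_eq_sum_choose_nsmul {M : Type*} [AddCommMonoid M] {u s t : Finset ι}
    (hsu : s ⊆ u) (htu : t ⊆ u) (hst : Disjoint s t) (k : ℕ) (f : ℕ → ℕ → M) :
    ∑ Γ ∈ powersetCard k u, f #(Γ ∩ s) #(Γ ∩ t) =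
      ∑ α ∈ range (#s + 1), ∑ β ∈ range (#t + 1),
        if α + β ≤ k then
          ((#s).choose α * (#t).choose β * (#u - #s - #t).choose (k - α - β)) • f α β
        else 0 := by
  have hmaps : ∀ Γ ∈ powersetCard k u,
      (#(Γ ∩ s), #(Γ ∩ t)) ∈ range (#s + 1) ×ˢ range (#t + 1) := fun Γ _ => by
    simp only [mem_product, mem_range, Nat.lt_succ_iff]
    exact ⟨card_le_card inter_subset_right, card_le_card inter_subset_right⟩
  rw [← sum_fiberwise_of_maps_to hmaps, sum_product]
  refine sum_congr rfl fun α _ => sum_congr rfl fun β _ => ?_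
  have hfiber : {Γ ∈ powersetCard k u | (#(Γ ∩ s), #(Γ ∩ t)) = (α, β)} =
      {Γ ∈ powersetCard k u | #(Γ ∩ s) = α ∧ #(Γ ∩ t) = β} := by
    simp only [Prod.mk.injEq]
  rw [sum_congr hfiber fun Γ hΓ => by rw [(mem_filter.1 hΓ).2.1, (mem_filter.1 hΓ).2.2],
    sum_const]
  split_ifs with hαβk
  · rw [card_filter_powersetCard_inter_inter hsu htu hst hαβk]
  · rw [filter_false_of_mem, card_empty, zero_smul]
    rintro Γ hΓ ⟨rfl, rfl⟩
    have hΓst : #(Γ ∩ s) + #(Γ ∩ t) ≤ #Γ := by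
      rw [← card_union_of_disjoint (hst.mono inter_subset_right inter_subset_right)]
      exact card_le_card (union_subset inter_subset_left inter_subset_left)
    exact hαβk ((mem_powersetCard.1 hΓ).2 ▸ hΓst)

end PowersetCount

theorem card_filter_mem_ite_add_card_inter {n : ℕ} {R : Type*} [DecidableEq R]
    (a a' : Fin n → Finset R) (r : R) (Γ : Finset (Fin n)) :
    #{i | r ∈ if i ∈ Γ then a' i else a i} +
        #(Γ ∩ ({i | r ∈ a i ∧ r ∉ a' i} : Finset _)) =
      onlyIn a a' r + inBoth a a' r + #(Γ ∩ ({i | r ∈ a' i ∧ r ∉ a i} : Finset _)) := by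
  simp only [onlyIn, inBoth, inter_comm Γ, ← filter_mem_eq_inter, card_filter, sum_filter,
    ← sum_add_distrib]
  refine sum_congr rfl fun i _ => ?_
  split_ifs <;> simp_all

theorem stmt_8_general {n : ℕ} {R : Type*} [Fintype R] [DecidableEq R]
    (v : R → ℝ) (w : ℕ → ℝ) (a a' : Fin n → Finset R) (ζ : ℕ) :
    ∑ Γ ∈ Finset.powersetCard ζ (Finset.univ : Finset (Fin n)),
        ∑ r : R, v r *
          w ((Finset.univ.filter (fun i : Fin n =>
              r ∈ (if i ∈ Γ then a' i else a i))).card)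
      = ∑ r : R, v r *
          ∑ α ∈ Finset.range (onlyIn a a' r + 1),
            ∑ β ∈ Finset.range (onlyIn a' a r + 1),
              (if α + β ≤ ζ then
                ((onlyIn a a' r).choose α * (onlyIn a' a r).choose β *
                  (n - onlyIn a a' r - onlyIn a' a r).choose (ζ - α - β) : ℝ) *
                  w (onlyIn a a' r + inBoth a a' r + β - α)
               else 0) := by
  rw [sum_comm]
  refine sum_congr rfl fun r _ => ?_
  rw [← mul_sum]
  congr 1
  have hcount (Γ : Finset (Fin n)) : #{i | r ∈ if i ∈ Γ then a' i else a i} =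
      onlyIn a a' r + inBoth a a' r + #(Γ ∩ ({i | r ∈ a' i ∧ r ∉ a i} : Finset _)) -
        #(Γ ∩ ({i | r ∈ a i ∧ r ∉ a' i} : Finset _)) := by
    have := card_filter_mem_ite_add_card_inter a a' r Γ
    omega
  have hdisj : Disjoint (α := Finset (Fin n))
      {i | r ∈ a i ∧ r ∉ a' i} {i | r ∈ a' i ∧ r ∉ a i} :=
    disjoint_filter.2 fun _ _ h₁ h₂ => h₁.2 h₂.1
  simp only [hcount, sum_powersetCard_eq_sum_choose_nsmul (subset_univ _) (subset_univ _) hdisj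
    ζ (fun α β => w (onlyIn a a' r + inBoth a a' r + β - α)), card_univ, Fintype.card_fin,
    nsmul_eq_mul, Nat.cast_mul]
  rfl

/-- coalition-sum expansion of welfare in resource allocation games:
Σ_{|Γ|=ζ} W(a'_Γ, a_{−Γ}) = Σ_r v_r Σ_{α≤e_r, β≤o_r, α+β≤ζ}
  C(e_r,α)C(o_r,β)C(n−e_r−o_r, ζ−α−β) · w(e_r + x_r + β − α). -/
theorem stmt_8 {n : ℕ} {R : Type*} [Fintype R] [DecidableEq R]
    (v : R → ℝ) (w : ℕ → ℝ) (a a' : Fin n → Finset R) (ζ : ℕ) (hζ : ζ ≤ n) :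
    ∑ Γ ∈ Finset.powersetCard ζ (Finset.univ : Finset (Fin n)),
        ∑ r : R, v r *
          w ((Finset.univ.filter (fun i : Fin n =>
              r ∈ (if i ∈ Γ then a' i else a i))).card)
      = ∑ r : R, v r *
          ∑ α ∈ Finset.range (onlyIn a a' r + 1),
            ∑ β ∈ Finset.range (onlyIn a' a r + 1),
              (if α + β ≤ ζ then
                ((onlyIn a a' r).choose α * (onlyIn a' a r).choose β *
                  (n - onlyIn a a' r - onlyIn a' a r).choose (ζ - α - β) : ℝ) *
                  w (onlyIn a a' r + inBoth a a' r + β - α)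
               else 0) :=
  stmt_8_general v w a a' ζ
end

section
/- If (G, W) is (λ, μ)-k-coalitionally smooth and a group best-response update is performed from state a by a coalition whose size ζ is drawn with probabilities p_1,...,p_k and whose membership is uniform among size-ζ subsets, then the expected welfare after the update satisfies E[W(a⁺) | a] ≥ (Σ_ζ p_ζ λ_ζ)·W(a°) − (Σ_ζ p_ζ μ_ζ)·W(a), where a° is a welfare-optimal joint action. -/
open Finset

theorem CoalSmooth.le_average_bestResponse {n k : ℕ} {A : Fin n → Type*}
    {W : (∀ i, A i) → ℝ} {lam mu : ℕ → ℝ} (hsmooth : CoalSmooth W k lam mu)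
    {a : ∀ i, A i} {b : Finset (Fin n) → ∀ i, A i}
    (hb : ∀ Γ : Finset (Fin n), ∀ a' : ∀ i, A i,
      W (deviate a a' Γ) ≤ W (deviate a (b Γ) Γ))
    (a' : ∀ i, A i) {ζ : ℕ} (h1 : 1 ≤ ζ) (hζk : ζ ≤ k) :
    lam ζ * W a' - mu ζ * W a ≤
      (1 / (n.choose ζ : ℝ)) *
        ∑ Γ ∈ Finset.powersetCard ζ (Finset.univ : Finset (Fin n)),
          W (deviate a (b Γ) Γ) :=
  (hsmooth a a' ζ h1 hζk).trans <|
    mul_le_mul_of_nonneg_left (sum_le_sum fun Γ _ => hb Γ a') (by positivity)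

theorem stmt_11_general {n k : ℕ} {A : Fin n → Type*}
    (W : (∀ i, A i) → ℝ)
    (lam mu : ℕ → ℝ)
    (hsmooth : CoalSmooth W k lam mu)
    (p : ℕ → ℝ) (hp : ∀ ζ, 0 ≤ p ζ)
    (a : ∀ i, A i) (b : Finset (Fin n) → ∀ i, A i)
    (hb : ∀ Γ : Finset (Fin n), ∀ a' : ∀ i, A i,
      W (deviate a a' Γ) ≤ W (deviate a (b Γ) Γ))
    (aopt : ∀ i, A i) :
    (∑ ζ ∈ Finset.Icc 1 k, p ζ * lam ζ) * W aopt
        - (∑ ζ ∈ Finset.Icc 1 k, p ζ * mu ζ) * W a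
      ≤ ∑ ζ ∈ Finset.Icc 1 k, p ζ *
          ((1 / (n.choose ζ : ℝ)) *
            ∑ Γ ∈ Finset.powersetCard ζ (Finset.univ : Finset (Fin n)),
              W (deviate a (b Γ) Γ)) := by
  rw [sum_mul, sum_mul, ← sum_sub_distrib]
  refine sum_le_sum fun ζ hζ => ?_
  obtain ⟨h1, hζk⟩ := mem_Icc.mp hζ
  calc p ζ * lam ζ * W aopt - p ζ * mu ζ * W a
      = p ζ * (lam ζ * W aopt - mu ζ * W a) := by ring
    _ ≤ _ := mul_le_mul_of_nonneg_left
        (hsmooth.le_average_bestResponse hb aopt h1 hζk) (hp ζ)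

/-- in a (λ,μ)-k-coalitionally smooth game, if from state a a coalition
of size ζ (drawn with probability p_ζ, uniformly among size-ζ subsets) performs a
group best response b, the expected resulting welfare is at least
(Σ_ζ p_ζ λ_ζ)·W(a°) − (Σ_ζ p_ζ μ_ζ)·W(a), where a° maximizes W. -/
theorem stmt_11 {n k : ℕ} {A : Fin n → Type*} (hn : 1 ≤ n) (hk : k ≤ n)
    (W : (∀ i, A i) → ℝ) (hW : ∀ a, 0 ≤ W a)
    (lam mu : ℕ → ℝ) (hlam : ∀ ζ, 0 ≤ lam ζ) (hmu : ∀ ζ, 0 ≤ mu ζ)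
    (hsmooth : CoalSmooth W k lam mu)
    (p : ℕ → ℝ) (hp : ∀ ζ, 0 ≤ p ζ) (hp1 : ∑ ζ ∈ Finset.Icc 1 k, p ζ = 1)
    (a : ∀ i, A i) (b : Finset (Fin n) → ∀ i, A i)
    (hb : ∀ Γ : Finset (Fin n), ∀ a' : ∀ i, A i,
      W (deviate a a' Γ) ≤ W (deviate a (b Γ) Γ))
    (aopt : ∀ i, A i) (hopt : ∀ a'', W a'' ≤ W aopt) :
    (∑ ζ ∈ Finset.Icc 1 k, p ζ * lam ζ) * W aopt
        - (∑ ζ ∈ Finset.Icc 1 k, p ζ * mu ζ) * W a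
      ≤ ∑ ζ ∈ Finset.Icc 1 k, p ζ *
          ((1 / (n.choose ζ : ℝ)) *
            ∑ Γ ∈ Finset.powersetCard ζ (Finset.univ : Finset (Fin n)),
              W (deviate a (b Γ) Γ)) :=
  stmt_11_general W lam mu hsmooth p hp a b hb aopt
end

section
/- If a system (G, W, U) is (λ, μ)-k-generalized-coalitionally smooth, then every k-strong Nash equilibrium a* with respect to U satisfies W(a*) ≥ (λ_ζ/(1+μ_ζ))·W(a°) for every ζ ∈ [k], where a° maximizes W. -/
open Finset

/-- (λ,μ)-k-generalized coalitional smoothness of the system (G, W, U). -/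
def GenCoalSmooth {n : ℕ} {A : Fin n → Type*} (W U : (∀ i, A i) → ℝ) (k : ℕ)
    (lam mu : ℕ → ℝ) : Prop :=
  ∀ a a' : ∀ i, A i, ∀ ζ, 1 ≤ ζ → ζ ≤ k →
    lam ζ * W a' - mu ζ * W a ≤
      (1 / (n.choose ζ : ℝ)) *
          (∑ Γ ∈ Finset.powersetCard ζ (Finset.univ : Finset (Fin n)),
            U (deviate a a' Γ))
        - U a + W a

/-! At a k-strong equilibrium `a*` every coalition of size `ζ ≤ k` is no better off after
deviating, so the averaged deviation term in the smoothness inequality at `(a*, a')` is at most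
`U a*`. The inequality then collapses to `λ_ζ W(a') ≤ (1 + μ_ζ) W(a*)` for every `a'`, in
particular for a welfare maximiser. -/

theorem kSNE.inv_choose_mul_sum_deviate_le {n k ζ : ℕ} {A : Fin n → Type*}
    {U : (∀ i, A i) → ℝ} {a : ∀ i, A i} (ha : kSNE U k a) (hU : 0 ≤ U a)
    (hζ₁ : 1 ≤ ζ) (hζk : ζ ≤ k) (a' : ∀ i, A i) :
    (1 / (n.choose ζ : ℝ)) * ∑ Γ ∈ powersetCard ζ (univ : Finset (Fin n)),
      U (deviate a a' Γ) ≤ U a := by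
  have hle : ∀ Γ ∈ powersetCard ζ (univ : Finset (Fin n)), U (deviate a a' Γ) ≤ U a := by
    intro Γ hΓ
    obtain ⟨-, hcard⟩ := mem_powersetCard.mp hΓ
    exact ha Γ (hcard ▸ hζ₁) (hcard ▸ hζk) a'
  have hcard : #(powersetCard ζ (univ : Finset (Fin n))) = n.choose ζ := by
    rw [card_powersetCard, card_univ, Fintype.card_fin]
  rcases (powersetCard ζ (univ : Finset (Fin n))).eq_empty_or_nonempty with hempty | hne
  · -- no coalition of size `ζ` exists (`n < ζ`), and the junk value `1 / 0 = 0` gives `0 ≤ U a`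
    simpa [hempty] using hU
  · have hpos : (0 : ℝ) < n.choose ζ := by exact_mod_cast hcard ▸ hne.card_pos
    rw [one_div, inv_mul_le_iff₀ hpos, ← hcard, ← nsmul_eq_mul]
    exact sum_le_card_nsmul _ _ _ hle

theorem GenCoalSmooth.mul_le_of_kSNE {n k ζ : ℕ} {A : Fin n → Type*}
    {W U : (∀ i, A i) → ℝ} {lam mu : ℕ → ℝ} (hsmooth : GenCoalSmooth W U k lam mu)
    {astar : ∀ i, A i} (hstar : kSNE U k astar) (hU : 0 ≤ U astar)
    (hζ₁ : 1 ≤ ζ) (hζk : ζ ≤ k) (a' : ∀ i, A i) :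
    lam ζ * W a' ≤ (1 + mu ζ) * W astar := by
  have := hsmooth astar a' ζ hζ₁ hζk
  have := hstar.inv_choose_mul_sum_deviate_le hU hζ₁ hζk a'
  linarith

theorem stmt_13_general {n k : ℕ} {A : Fin n → Type*}
    (W U : (∀ i, A i) → ℝ) (hU : ∀ a, 0 ≤ U a)
    (lam mu : ℕ → ℝ) (hmu : ∀ ζ, 0 ≤ mu ζ)
    (hsmooth : GenCoalSmooth W U k lam mu)
    (astar : ∀ i, A i) (hstar : kSNE U k astar)
    (aopt : ∀ i, A i) :
    ∀ ζ, 1 ≤ ζ → ζ ≤ k → (lam ζ / (1 + mu ζ)) * W aopt ≤ W astar := by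
  intro ζ hζ₁ hζk
  have hpos : (0 : ℝ) < 1 + mu ζ := by linarith [hmu ζ]
  rw [div_mul_eq_mul_div, div_le_iff₀ hpos, mul_comm (W astar)]
  exact hsmooth.mul_le_of_kSNE hstar (hU astar) hζ₁ hζk aopt

/-- if (G, W, U) is (λ,μ)-k-generalized-coalitionally smooth, every
k-strong Nash equilibrium a* with respect to the utility U satisfies
W(a*) ≥ (λ_ζ/(1+μ_ζ))·W(a°) for every ζ ∈ [k], where a° maximizes W. -/
theorem stmt_13 {n k : ℕ} {A : Fin n → Type*}
    (W U : (∀ i, A i) → ℝ) (hW : ∀ a, 0 ≤ W a) (hU : ∀ a, 0 ≤ U a)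
    (lam mu : ℕ → ℝ) (hlam : ∀ ζ, 0 ≤ lam ζ) (hmu : ∀ ζ, 0 ≤ mu ζ)
    (hsmooth : GenCoalSmooth W U k lam mu)
    (astar : ∀ i, A i) (hstar : kSNE U k astar)
    (aopt : ∀ i, A i) (hopt : ∀ a, W a ≤ W aopt) :
    ∀ ζ, 1 ≤ ζ → ζ ≤ k → (lam ζ / (1 + mu ζ)) * W aopt ≤ W astar :=
  stmt_13_general W U hU lam mu hmu hsmooth astar hstar aopt
end

section
/- For a common-interest resource allocation game with n agents and local welfare w, the reciprocal 1/P* of the optimal value P* of the linear program (P[k]) lower-bounds the k-strong price of anarchy over the class G_n: for every game G ∈ G_n with welfare W(a) = Σ_r v_r w(|a|_r), every k-strong Nash equilibrium a* and welfare-optimal a° satisfy W(a*) ≥ (1/P*)·W(a°), where (P[k]) minimizes ρ over ρ ∈ ℝ, ν_1,...,ν_k ≥ 0 subject to: for all (e,x,o) with 1 ≤ e+x+o ≤ n, 0 ≥ w(o+x) − ρ·w(e+x) + Σ_{ζ=1}^{k} ν_ζ·( C(n,ζ)·w(e+x) − Σ_{α≤e, β≤o, α+β≤ζ} C(e,α)C(o,β)C(n−e−o,ζ−α−β)·w(e+x+β−α)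 ). -/
/-!
Label each resource `r` by `(e, x, o) = (|E_r|, |X_r|, |O_r|)`, where `E_r`, `X_r`, `O_r` are the
agents using `r` only under `a*`, under both `a*` and `a°`, and only under `a°`. When a coalition
`Γ` switches from `a*` to `a°`, the load on `r` becomes `e + x + |Γ ∩ O_r| - |Γ ∩ E_r|`; counting
the `ζ`-sets `Γ` with `|Γ ∩ E_r| = α` and `|Γ ∩ O_r| = β` turns `∑_{|Γ| = ζ} w(load)` into the
binomial sum of (P[k]). Weighting the constraint of (P[k]) at each resource's label by `v_r` and
summing gives `W(a°) - ρ W(a*) + ∑_ζ ν_ζ (C(n,ζ) W(a*) - ∑_{|Γ|=ζ} W(a°_Γ, a*_{-Γ})) ≤ 0`,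
and every bracket is nonnegative because `a*` is a `k`-strong equilibrium.
-/

open Finset

section Counting

variable {ι : Type*} [DecidableEq ι]

theorem card_sdiff_union_inter_add_card_inter_sdiff (s t Γ : Finset ι) :
    #(s \ Γ ∪ t ∩ Γ) + #(Γ ∩ (s \ t)) = #s + #(Γ ∩ (t \ s)) := by
  -- both sides count the same set, split into two disjoint parts in two ways
  rw [← card_union_of_disjoint, ← card_union_of_disjoint]
  · congr 1
    ext i
    simp only [mem_union, mem_sdiff, mem_inter]
    tauto
  · simp only [disjoint_left, mem_inter, mem_sdiff]
    tauto
  · simp only [disjoint_left, mem_union, mem_inter, mem_sdiff]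
    tauto

theorem card_sdiff_add_card_inter_add_card_sdiff_le [Fintype ι] (s t : Finset ι) :
    #(s \ t) + #(s ∩ t) + #(t \ s) ≤ Fintype.card ι := by
  rw [card_sdiff_add_card_inter, add_comm, card_sdiff_add_card]
  exact card_le_univ _

variable [Fintype ι]

theorem card_powersetCard_filter_card_inter_eq (E O : Finset ι) (hEO : Disjoint E O)
    {ζ α β : ℕ} (h : α + β ≤ ζ) :
    #{Γ ∈ powersetCard ζ univ | #(Γ ∩ E) = α ∧ #(Γ ∩ O) = β}
      = (#E).choose α * (#O).choose β * (Fintype.card ι - #E - #O).choose (ζ - α - β) := by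
  set Z := (E ∪ O)ᶜ
  have hZ : #Z = Fintype.card ι - #E - #O := by
    rw [card_compl, card_union_of_disjoint hEO]
    omega
  have hEO' : ∀ i ∈ E, i ∉ O := fun _ h => disjoint_left.1 hEO h
  have hmemZ : ∀ i, i ∈ Z ↔ i ∉ E ∧ i ∉ O := by simp [Z]
  have hcard {P Q S : Finset ι} (hP : P ⊆ E) (hQ : Q ⊆ O) (hS : S ⊆ Z) :
      #(P ∪ Q ∪ S) = #P + #Q + #S := by
    simp only [subset_iff, hmemZ] at hP hQ hS
    rw [card_union_of_disjoint, card_union_of_disjoint] <;>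
      simp only [disjoint_left, mem_union] <;> grind
  have hinter {P Q S : Finset ι} (hP : P ⊆ E) (hQ : Q ⊆ O) (hS : S ⊆ Z) :
      (P ∪ Q ∪ S) ∩ E = P ∧ (P ∪ Q ∪ S) ∩ O = Q ∧ (P ∪ Q ∪ S) ∩ Z = S := by
    simp only [subset_iff, hmemZ] at hP hQ hS
    refine ⟨?_, ?_, ?_⟩ <;> ext i <;> simp only [mem_union, mem_inter, hmemZ] <;> grind
  rw [← hZ, ← card_powersetCard, ← card_powersetCard, ← card_powersetCard, ← card_product,
    ← card_product]
  refine card_nbij' (fun Γ => ((Γ ∩ E, Γ ∩ O), Γ ∩ Z)) (fun p => p.1.1 ∪ p.1.2 ∪ p.2)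
    ?_ ?_ ?_ ?_
  · intro Γ hΓ
    simp only [coe_filter, mem_powersetCard, Set.mem_ofPred_eq, coe_product, Set.mem_prod,
      mem_coe] at hΓ ⊢
    obtain ⟨⟨-, hζ⟩, hα, hβ⟩ := hΓ
    have hsplit : Γ ∩ E ∪ Γ ∩ O ∪ Γ ∩ Z = Γ := by
      ext i
      simp only [mem_union, mem_inter, hmemZ]
      tauto
    have := hcard (P := Γ ∩ E) (Q := Γ ∩ O) (S := Γ ∩ Z) inter_subset_right inter_subset_right
      inter_subset_right
    rw [hsplit] at this
    exact ⟨⟨⟨inter_subset_right, hα⟩, inter_subset_right, hβ⟩, inter_subset_right, by omega⟩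
  · rintro ⟨⟨P, Q⟩, S⟩ h
    simp only [coe_filter, mem_powersetCard, Set.mem_ofPred_eq, coe_product, Set.mem_prod,
      mem_coe] at h ⊢
    obtain ⟨⟨⟨hP, hα⟩, hQ, hβ⟩, hS, hγ⟩ := h
    obtain ⟨hPE, hQO, -⟩ := hinter hP hQ hS
    exact ⟨⟨subset_univ _, by rw [hcard hP hQ hS]; omega⟩, by rw [hPE, hα], by rw [hQO, hβ]⟩
  · intro Γ _
    ext i
    simp only [mem_union, mem_inter, hmemZ]
    tauto
  · rintro ⟨⟨P, Q⟩, S⟩ h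
    simp only [coe_product, Set.mem_prod, mem_coe, mem_powersetCard] at h
    obtain ⟨hPE, hQO, hSZ⟩ := hinter h.1.1.1 h.1.2.1 h.2.1
    simp only [hPE, hQO, hSZ]

theorem sum_powersetCard_eq_sum_choose {M : Type*} [NonAssocSemiring M] (E O : Finset ι)
    (hEO : Disjoint E O) (ζ : ℕ) (f : ℕ → ℕ → M) :
    ∑ Γ ∈ powersetCard ζ univ, f #(Γ ∩ E) #(Γ ∩ O) =
      ∑ α ∈ range (#E + 1), ∑ β ∈ range (#O + 1),
        if α + β ≤ ζ then
          ((#E).choose α * (#O).choose β * (Fintype.card ι - #E - #O).choose (ζ - α - β) : M)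
            * f α β
        else 0 := by
  have hmaps : ∀ Γ ∈ powersetCard ζ univ,
      (#(Γ ∩ E), #(Γ ∩ O)) ∈ range (#E + 1) ×ˢ range (#O + 1) := fun Γ _ => by
    simp only [mem_product, mem_range, Nat.lt_succ_iff]
    exact ⟨card_le_card inter_subset_right, card_le_card inter_subset_right⟩
  refine (sum_fiberwise_of_maps_to' hmaps fun p => f p.1 p.2).symm.trans ?_
  rw [sum_product]
  refine sum_congr rfl fun α _ => sum_congr rfl fun β _ => ?_
  simp only [Prod.mk.injEq, sum_const, nsmul_eq_mul]
  split_ifs with h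
  · rw [card_powersetCard_filter_card_inter_eq E O hEO h]
    push_cast
    rfl
  · have hempty : {Γ ∈ powersetCard ζ (univ : Finset ι) | #(Γ ∩ E) = α ∧ #(Γ ∩ O) = β} = ∅ := by
      refine filter_eq_empty_iff.2 fun Γ hΓ ⟨hα, hβ⟩ => h ?_
      have hd : Disjoint (Γ ∩ E) (Γ ∩ O) := hEO.mono inter_subset_right inter_subset_right
      rw [← hα, ← hβ, ← card_union_of_disjoint hd, ← (mem_powersetCard.1 hΓ).2]
      exact card_le_card (union_subset inter_subset_left inter_subset_left)
    rw [hempty, card_empty, Nat.cast_zero, zero_mul]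

end Counting

theorem kSNE.sum_powersetCard_deviate_le {n k ζ : ℕ} {A : Fin n → Type*}
    {W : (∀ i, A i) → ℝ} {a : ∀ i, A i} (h : kSNE W k a) (a' : ∀ i, A i) (hζ : ζ ∈ Icc 1 k) :
    ∑ Γ ∈ powersetCard ζ univ, W (deviate a a' Γ) ≤ n.choose ζ * W a := by
  calc ∑ Γ ∈ powersetCard ζ univ, W (deviate a a' Γ)
      ≤ ∑ Γ ∈ powersetCard ζ (univ : Finset (Fin n)), W a :=
        sum_le_sum fun Γ hΓ => by
          have hcard := (mem_powersetCard.1 hΓ).2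
          exact h Γ (hcard ▸ (mem_Icc.1 hζ).1) (hcard ▸ (mem_Icc.1 hζ).2) a'
    _ = n.choose ζ * W a := by simp

section Game

variable {n : ℕ} {R : Type*} [DecidableEq R] {A : Fin n → Type*} (act : ∀ i, A i → Finset R)

def users (a : ∀ i, A i) (r : R) : Finset (Fin n) := univ.filter fun i => r ∈ act i (a i)

theorem users_deviate (a a' : ∀ i, A i) (Γ : Finset (Fin n)) (r : R) :
    users act (deviate a a' Γ) r = users act a r \ Γ ∪ users act a' r ∩ Γ := by
  ext i
  simp only [users, mem_filter, mem_univ, true_and, mem_union, mem_sdiff, mem_inter]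
  by_cases hi : i ∈ Γ <;> simp [deviate, hi]

theorem card_users_deviate (a a' : ∀ i, A i) (Γ : Finset (Fin n)) (r : R) :
    #(users act (deviate a a' Γ) r) =
      #(users act a r \ users act a' r) + #(users act a r ∩ users act a' r)
        + #(Γ ∩ (users act a' r \ users act a r)) - #(Γ ∩ (users act a r \ users act a' r)) := by
  have := card_sdiff_union_inter_add_card_inter_sdiff (users act a r) (users act a' r) Γ
  rw [card_sdiff_add_card_inter, ← users_deviate] at *
  omega

/-- The inner sum of (P[k]) at the label `(e, x, o)`. -/
def coalitionSum (w : ℕ → ℝ) (n ζ e x o : ℕ) : ℝ :=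
  ∑ α ∈ range (e + 1), ∑ β ∈ range (o + 1),
    if α + β ≤ ζ then
      (e.choose α * o.choose β * (n - e - o).choose (ζ - α - β) : ℝ) * w (e + x + β - α)
    else 0

theorem sum_powersetCard_deviate_eq_coalitionSum (w : ℕ → ℝ) (a a' : ∀ i, A i) (r : R) (ζ : ℕ) :
    ∑ Γ ∈ powersetCard ζ univ, w #(users act (deviate a a' Γ) r) =
      coalitionSum w n ζ #(users act a r \ users act a' r) #(users act a r ∩ users act a' r)
        #(users act a' r \ users act a r) := by
  simp only [card_users_deviate]
  rw [sum_powersetCard_eq_sum_choose _ _ disjoint_sdiff_sdiff ζ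
    fun α β => w (#(users act a r \ users act a' r) + #(users act a r ∩ users act a' r) + β - α),
    Fintype.card_fin]
  rfl

/-- The constraint of (P[k]) at the label `(e, x, o)` reads `lpConstraint w n k ρ ν e x o ≤ 0`. -/
def lpConstraint (w : ℕ → ℝ) (n k : ℕ) (ρ : ℝ) (ν : ℕ → ℝ) (e x o : ℕ) : ℝ :=
  w (o + x) - ρ * w (e + x)
    + ∑ ζ ∈ Icc 1 k, ν ζ * ((n.choose ζ : ℝ) * w (e + x) - coalitionSum w n ζ e x o)

theorem lpConstraint_nonpos {w : ℕ → ℝ} (hw0 : w 0 = 0) {n k : ℕ} {ρ : ℝ} {ν : ℕ → ℝ}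
    (hfeas : ∀ e x o : ℕ, 1 ≤ e + x + o → e + x + o ≤ n → lpConstraint w n k ρ ν e x o ≤ 0)
    {e x o : ℕ} (h : e + x + o ≤ n) : lpConstraint w n k ρ ν e x o ≤ 0 := by
  rcases Nat.eq_zero_or_pos (e + x + o) with hzero | hpos
  · obtain ⟨⟨rfl, rfl⟩, rfl⟩ : (e = 0 ∧ x = 0) ∧ o = 0 := by
      simpa only [Nat.add_eq_zero_iff] using hzero
    simp [lpConstraint, coalitionSum, hw0]
  · exact hfeas e x o hpos h

variable [Fintype R]

def welfare (v : R → ℝ) (w : ℕ → ℝ) (a : ∀ i, A i) : ℝ := ∑ r, v r * w #(users act a r)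

theorem sum_powersetCard_welfare_deviate (v : R → ℝ) (w : ℕ → ℝ) (a a' : ∀ i, A i) (ζ : ℕ) :
    ∑ Γ ∈ powersetCard ζ univ, welfare act v w (deviate a a' Γ) =
      ∑ r, v r * coalitionSum w n ζ #(users act a r \ users act a' r)
        #(users act a r ∩ users act a' r) #(users act a' r \ users act a r) := by
  simp only [welfare, ← sum_powersetCard_deviate_eq_coalitionSum, mul_sum]
  exact sum_comm

theorem sum_mul_lpConstraint (v : R → ℝ) (w : ℕ → ℝ) (k : ℕ) (ρ : ℝ) (ν : ℕ → ℝ)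
    (a a' : ∀ i, A i) :
    ∑ r, v r * lpConstraint w n k ρ ν #(users act a r \ users act a' r)
        #(users act a r ∩ users act a' r) #(users act a' r \ users act a r) =
      welfare act v w a' - ρ * welfare act v w a
        + ∑ ζ ∈ Icc 1 k, ν ζ * ((n.choose ζ : ℝ) * welfare act v w a
          - ∑ Γ ∈ powersetCard ζ univ, welfare act v w (deviate a a' Γ)) := by
  have hcard_a' : ∀ r, #(users act a' r \ users act a r) + #(users act a r ∩ users act a' r)
      = #(users act a' r) := fun r => by rw [inter_comm, card_sdiff_add_card_inter]
  simp only [sum_powersetCard_welfare_deviate]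
  simp only [welfare, lpConstraint, card_sdiff_add_card_inter,
    hcard_a', mul_add, mul_sub, sum_add_distrib, sum_sub_distrib, mul_sum]
  simp only [sum_comm (s := (univ : Finset R)) (t := Icc 1 k)]
  simp only [mul_comm, mul_assoc, mul_left_comm]

end Game

theorem stmt_17_general {n k : ℕ}
    {R : Type*} [Fintype R] [DecidableEq R]
    {A : Fin n → Type*}
    (act : ∀ i, A i → Finset R)
    (v : R → ℝ) (hv : ∀ r, 0 ≤ v r)
    (w : ℕ → ℝ) (hw0 : w 0 = 0)
    (ρ : ℝ) (ν : ℕ → ℝ) (hν : ∀ ζ, 0 ≤ ν ζ)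
    (hfeas : ∀ e x o : ℕ, 1 ≤ e + x + o → e + x + o ≤ n →
      w (o + x) - ρ * w (e + x)
        + ∑ ζ ∈ Finset.Icc 1 k, ν ζ *
            ((n.choose ζ : ℝ) * w (e + x)
              - ∑ α ∈ Finset.range (e + 1), ∑ β ∈ Finset.range (o + 1),
                  (if α + β ≤ ζ then
                    (e.choose α * o.choose β * (n - e - o).choose (ζ - α - β) : ℝ) *
                      w (e + x + β - α)
                   else 0)) ≤ 0) :
    ∀ astar aopt : ∀ i, A i,
      kSNE (fun a => ∑ r : R, v r *
        w ((Finset.univ.filter (fun i : Fin n => r ∈ act i (a i))).card)) k astar →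
      (∀ a : ∀ i, A i,
        (∑ r : R, v r *
          w ((Finset.univ.filter (fun i : Fin n => r ∈ act i (a i))).card))
        ≤ ∑ r : R, v r *
          w ((Finset.univ.filter (fun i : Fin n => r ∈ act i (aopt i))).card)) →
      (∑ r : R, v r *
          w ((Finset.univ.filter (fun i : Fin n => r ∈ act i (aopt i))).card))
        ≤ ρ * ∑ r : R, v r *
            w ((Finset.univ.filter (fun i : Fin n => r ∈ act i (astar i))).card) := by
  intro astar aopt hSNE _
  change kSNE (welfare act v w) k astar at hSNE
  change welfare act v w aopt ≤ ρ * welfare act v w astar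
  have hslack : ∑ r, v r * lpConstraint w n k ρ ν #(users act astar r \ users act aopt r)
      #(users act astar r ∩ users act aopt r) #(users act aopt r \ users act astar r) ≤ 0 :=
    sum_nonpos fun r _ => mul_nonpos_of_nonneg_of_nonpos (hv r) (lpConstraint_nonpos hw0
      hfeas ((card_sdiff_add_card_inter_add_card_sdiff_le _ _).trans_eq (Fintype.card_fin n)))
  have hdev : 0 ≤ ∑ ζ ∈ Icc 1 k, ν ζ * ((n.choose ζ : ℝ) * welfare act v w astar
      - ∑ Γ ∈ powersetCard ζ univ, welfare act v w (deviate astar aopt Γ)) :=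
    sum_nonneg fun ζ hζ =>
      mul_nonneg (hν ζ) (sub_nonneg.2 (hSNE.sum_powersetCard_deviate_le aopt hζ))
  rw [sum_mul_lpConstraint] at hslack
  linarith

/-- soundness of the LP (P[k]) for resource allocation games. If
(ρ, ν_1,…,ν_k) with ν_ζ ≥ 0 satisfies, for all labels (e,x,o) with 1 ≤ e+x+o ≤ n,
0 ≥ w(o+x) − ρ·w(e+x) + Σ_ζ ν_ζ·(C(n,ζ)·w(e+x) − Σ_{α,β} C(e,α)C(o,β)C(n−e−o,ζ−α−β)
w(e+x+β−α)), then for every n-agent resource allocation game with local welfare w,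
every k-strong Nash equilibrium a* and every welfare maximizer a° satisfy
W(a°) ≤ ρ·W(a*); i.e., 1/ρ (hence 1/P*) lower-bounds the k-strong price of anarchy. -/
theorem stmt_17 {n k : ℕ} (hn : 1 ≤ n) (hk1 : 1 ≤ k) (hkn : k ≤ n)
    {R : Type*} [Fintype R] [DecidableEq R]
    {A : Fin n → Type*} [∀ i, Fintype (A i)] [∀ i, Nonempty (A i)]
    (act : ∀ i, A i → Finset R)
    (v : R → ℝ) (hv : ∀ r, 0 ≤ v r)
    (w : ℕ → ℝ) (hw0 : w 0 = 0) (hwpos : ∀ y, 1 ≤ y → y ≤ n → 0 < w y)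
    (ρ : ℝ) (ν : ℕ → ℝ) (hν : ∀ ζ, 0 ≤ ν ζ)
    (hfeas : ∀ e x o : ℕ, 1 ≤ e + x + o → e + x + o ≤ n →
      w (o + x) - ρ * w (e + x)
        + ∑ ζ ∈ Finset.Icc 1 k, ν ζ *
            ((n.choose ζ : ℝ) * w (e + x)
              - ∑ α ∈ Finset.range (e + 1), ∑ β ∈ Finset.range (o + 1),
                  (if α + β ≤ ζ then
                    (e.choose α * o.choose β * (n - e - o).choose (ζ - α - β) : ℝ) *
                      w (e + x + β - α)
                   else 0)) ≤ 0) :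
    ∀ astar aopt : ∀ i, A i,
      kSNE (fun a => ∑ r : R, v r *
        w ((Finset.univ.filter (fun i : Fin n => r ∈ act i (a i))).card)) k astar →
      (∀ a : ∀ i, A i,
        (∑ r : R, v r *
          w ((Finset.univ.filter (fun i : Fin n => r ∈ act i (a i))).card))
        ≤ ∑ r : R, v r *
          w ((Finset.univ.filter (fun i : Fin n => r ∈ act i (aopt i))).card)) →
      (∑ r : R, v r *
          w ((Finset.univ.filter (fun i : Fin n => r ∈ act i (aopt i))).card))
        ≤ ρ * ∑ r : R, v r *
            w ((Finset.univ.filter (fun i : Fin n => r ∈ act i (astar i))).card) :=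
  stmt_17_general act v hv w hw0 ρ ν hν hfeas
end
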